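/- arXiv:2207.11198 — 4 statements merged into one kernel-verified Lean document; each statement's English description precedes it below -/
import Mathlib

section
/- Let f be the Cole–Vishkin reduction function. For all natural numbers x, y, z with x > y > z, we have f(x,y) ≠ f(y,z). -/
noncomputable def cvIdx (X Y : ℕ) : ℕ := sInf ({min X.size Y.size} ∪ {k | X.testBit k ≠ Y.testBit k})

/-- Cole–Vishkin reduction function `f(X,Y) = 2 i + X_i`. -/
noncomputable def cvF (X Y : ℕ) : ℕ := 2 * cvIdx X Y + (if X.testBit (cvIdx X Y) then 1 else 0)

theorem cvF_cole_vishkin (x y z : ℕ) (hxy : x > y) (hyz : y > z) :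
    cvF x y ≠ cvF y z := by
  intro h
  have hmem1 : cvIdx x y ∈ ({min x.size y.size} ∪ {k | x.testBit k ≠ y.testBit k} : Set ℕ) :=
    Nat.sInf_mem ⟨min x.size y.size, Or.inl rfl⟩
  have hmem2 : cvIdx y z ∈ ({min y.size z.size} ∪ {k | y.testBit k ≠ z.testBit k} : Set ℕ) :=
    Nat.sInf_mem ⟨min y.size z.size, Or.inl rfl⟩
  have hij : cvIdx x y = cvIdx y z ∧ x.testBit (cvIdx x y) = y.testBit (cvIdx y z) := by
    unfold cvF at h
    split_ifs at h with h1 h2 h2 <;> simp_all <;> omega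
  obtain ⟨hij, hbit⟩ := hij
  -- first pair: index must be the min-size marker
  have hi_eq : cvIdx x y = min x.size y.size := by
    rcases hmem1 with hm | hd
    · exact hm
    · exfalso; apply hd; rw [hbit, hij]
  have hminxy : min x.size y.size = y.size := min_eq_right (Nat.size_le_size hxy.le)
  have hminyz : min y.size z.size = z.size := min_eq_right (Nat.size_le_size hyz.le)
  -- j ≤ size z
  have hjle : cvIdx y z ≤ z.size := by
    have : cvIdx y z ≤ min y.size z.size :=
      Nat.sInf_le (Or.inl rfl)
    omega
  have hys : y.size ≤ z.size := by
    have : cvIdx x y = y.size := by rw [hi_eq, hminxy]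
    omega
  -- conclude y = z
  have : y = z := by
    apply Nat.eq_of_testBit_eq
    intro k
    by_cases hk : k < cvIdx y z
    · by_contra hne
      have : cvIdx y z ≤ k := Nat.sInf_le (Or.inr hne)
      omega
    · have hky : y.size ≤ k := by
        have : cvIdx x y = y.size := by rw [hi_eq, hminxy]
        omega
      have hy : y.testBit k = false := Nat.testBit_eq_false_of_lt (Nat.size_le.mp hky)
      have hz : z.testBit k = false :=
        Nat.testBit_eq_false_of_lt (Nat.size_le.mp (le_trans (Nat.size_le_size hyz.le) hky))
      rw [hy, hz]
  omega
end

section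
/- Let p be a vertex of the cycle C_n with injective labeling X, and suppose p is not a local minimum. Define a_p by the recursion a_p = mex{a_q : q ∼ p, X_q > X_p} (with a_p = 0 at local maxima). If p lies on a strictly monotone chain v_0 > v_1 > ⋯ with p = v_i, where v_0 is the local maximum of the chain, then a_p ≡ i (mod 2). -/
open SimpleGraph

/-- `mex S` is the minimum natural number not in `S`. -/
noncomputable def mex (S : Set ℕ) : ℕ := sInf {m : ℕ | m ∉ S}

lemma mex_empty : mex (∅ : Set ℕ) = 0 := by
  simp [mex, Nat.sInf_eq_zero]

lemma mex_singleton (t : ℕ) : mex ({t} : Set ℕ) = if t = 0 then 1 else 0 := by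
  unfold mex
  split_ifs with h
  · subst h
    refine le_antisymm (Nat.sInf_le (by simp)) ?_
    rw [Nat.one_le_iff_ne_zero]
    intro h0
    rcases (Nat.sInf_eq_zero.mp h0) with h1 | h1
    · simp at h1
    · have : (1 : ℕ) ∈ {m : ℕ | m ∉ ({0} : Set ℕ)} := by simp
      rw [h1] at this; exact this
  · exact Nat.sInf_eq_zero.mpr (Or.inl (by simp [Ne.symm h]))

theorem a_parity_on_monotone_chain
    (n : ℕ) (hn : 3 ≤ n) (X : Fin n → ℕ) (hX : Function.Injective X)
    (a : Fin n → ℕ)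
    (ha : ∀ p : Fin n, a p = mex {x | ∃ u : Fin n, (cycleGraph n).Adj u p ∧ X p < X u ∧ a u = x})
    (k : ℕ) (q : ℕ → Fin n)
    -- `q 0` is a local maximum
    (hmax : ∀ u : Fin n, (cycleGraph n).Adj u (q 0) → X u < X (q 0))
    -- the chain is a path with strictly decreasing labels
    (hadj : ∀ i < k, (cycleGraph n).Adj (q i) (q (i + 1)))
    (hdec : ∀ i < k, X (q (i + 1)) < X (q i))
    -- each vertex of the chain (past the first) has exactly one higher-labeled
    -- neighbor, namely its predecessor on the chain
    (huniq : ∀ i < k, ∀ u : Fin n,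
      (cycleGraph n).Adj u (q (i + 1)) → X (q (i + 1)) < X u → u = q i) :
    ∀ i ≤ k, a (q i) % 2 = i % 2 := by
  have key : ∀ i ≤ k, a (q i) = i % 2 := by
    intro i
    induction i with
    | zero =>
      intro _
      rw [ha (q 0)]
      have : {x | ∃ u : Fin n, (cycleGraph n).Adj u (q 0) ∧ X (q 0) < X u ∧ a u = x}
          = (∅ : Set ℕ) := by
        ext x
        simp only [Set.mem_setOf_eq, Set.mem_empty_iff_false, iff_false]
        rintro ⟨u, hadj', hlt, -⟩
        exact absurd hlt (not_lt.mpr (le_of_lt (hmax u hadj')))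
      rw [this, mex_empty]
    | succ i ih =>
      intro hik
      have hik' : i < k := hik
      have hik'' : i ≤ k := le_of_lt hik'
      rw [ha (q (i + 1))]
      have hset : {x | ∃ u : Fin n, (cycleGraph n).Adj u (q (i+1)) ∧ X (q (i+1)) < X u ∧ a u = x}
          = ({a (q i)} : Set ℕ) := by
        ext x
        simp only [Set.mem_setOf_eq, Set.mem_singleton_iff]
        constructor
        · rintro ⟨u, hadj', hlt, rfl⟩
          rw [huniq i hik' u hadj' hlt]
        · rintro rfl
          exact ⟨q i, hadj i hik', hdec i hik', rfl⟩
      rw [hset, mex_singleton, ih hik'']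
      rcases Nat.even_or_odd i with he | ho
      · simp [Nat.even_iff.mp he, Nat.succ_mod_two_eq_one_iff.mpr (Nat.even_iff.mp he)]
      · simp [Nat.odd_iff.mp ho, Nat.succ_mod_two_eq_zero_iff.mpr (Nat.odd_iff.mp ho)]
  intro i hik
  rw [key i hik, Nat.mod_mod_of_dvd i dvd_rfl]
end

section
/- Let log* : ℝ≥1 → ℕ be defined by log*(x) = 0 if x ≤ 1 and log*(x) = 1 + log*(log₂ x) otherwise. Then for the function F(x) = 2⌈log₂(x+1)⌉ + 1, there is a constant α > 0 such that for all x ≥ 16, log*(F(x)) ≤ log*(x) and iterating F at most α·log*(x) times starting from x yields a value below 10. -/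
/-- `F x = 2⌈log₂(x+1)⌉ + 1`; note `Nat.size x = ⌈log₂(x+1)⌉`. -/
def F (x : ℕ) : ℕ := 2 * Nat.size x + 1

/-- Iterated base-2 logarithm. -/
def logStar : ℕ → ℕ
  | x => if x ≤ 1 then 0 else logStar (Nat.log 2 x) + 1
decreasing_by
  exact Nat.log_lt_self 2 (by omega)

/-! `F x ≤ 2 log₂ x + 3 ≤ 4 log₂ x`, so `log₂ (F x) ≤ log₂ log₂ x + 2`: a step of `F` drops one
level of the tower of logarithms at the cost of an additive constant one level further down, and
adding `c ≤ 2ʷ` to `w` raises `log*` by at most one. Hence `log* (F x) ≤ log* x` for `x ≥ 16` and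
`log* (F (F x)) < log* x` for `x ≥ 2¹⁶`, while below `2¹⁶` three steps already reach a value
below `10`; so `2 log* x + 1 ≤ 3 log* x` steps suffice. -/

lemma Nat.log_le_log_add_of_le_pow_mul {b n y k : ℕ} (hb : 1 < b) (h : n ≤ b ^ k * y) :
    Nat.log b n ≤ Nat.log b y + k := by
  rcases Nat.eq_zero_or_pos n with rfl | hn
  · simp
  refine Nat.lt_succ_iff.mp (Nat.log_lt_of_lt_pow hn.ne' ?_)
  calc n ≤ b ^ k * y := h
    _ < b ^ k * b ^ (Nat.log b y + 1) :=
        Nat.mul_lt_mul_of_pos_left (Nat.lt_pow_succ_log_self hb y) (by positivity)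
    _ = b ^ (Nat.log b y + k + 1) := by rw [← pow_add]; congr 1; omega

lemma logStar_of_le_one {x : ℕ} (h : x ≤ 1) : logStar x = 0 := by
  rw [logStar, if_pos h]

lemma logStar_of_two_le {x : ℕ} (h : 2 ≤ x) : logStar x = logStar (Nat.log 2 x) + 1 := by
  rw [logStar, if_neg (by omega)]

lemma logStar_le_logStar_log_add_one (x : ℕ) : logStar x ≤ logStar (Nat.log 2 x) + 1 := by
  rcases Nat.lt_or_ge x 2 with hx | hx
  · rw [logStar_of_le_one (by omega)]; omega
  · rw [logStar_of_two_le hx]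

lemma logStar_mono : Monotone logStar := by
  intro a
  induction a using Nat.strong_induction_on with
  | _ a ih =>
    intro b hab
    rcases Nat.lt_or_ge a 2 with ha | ha
    · rw [logStar_of_le_one (by omega)]; exact Nat.zero_le _
    · rw [logStar_of_two_le ha, logStar_of_two_le (ha.trans hab)]
      exact Nat.succ_le_succ
        (ih _ (Nat.log_lt_self 2 (by omega)) (Nat.log_mono_right hab))

lemma logStar_add_le {w c : ℕ} (hc : c ≤ 2 ^ w) : logStar (w + c) ≤ logStar w + 1 := by
  have hlog : Nat.log 2 (w + c) ≤ w := by
    have := Nat.lt_two_pow_self (n := w)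
    exact Nat.lt_succ_iff.mp (Nat.log_lt_of_lt_pow' w.succ_ne_zero (by rw [pow_succ]; omega))
  exact (logStar_le_logStar_log_add_one _).trans (Nat.succ_le_succ (logStar_mono hlog))

lemma logStar_le_of_le_pow_mul {n y k : ℕ} (hy : 2 ≤ y) (hk : k ≤ 2 ^ Nat.log 2 y)
    (hn : n ≤ 2 ^ k * y) : logStar n ≤ logStar y + 1 := by
  calc logStar n ≤ logStar (Nat.log 2 n) + 1 := logStar_le_logStar_log_add_one n
    _ ≤ logStar (Nat.log 2 y + k) + 1 :=
        Nat.succ_le_succ (logStar_mono (Nat.log_le_log_add_of_le_pow_mul one_lt_two hn))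
    _ ≤ logStar (Nat.log 2 y) + 1 + 1 := Nat.succ_le_succ (logStar_add_le hk)
    _ = logStar y + 1 := by rw [logStar_of_two_le hy]

lemma F_le_of_lt_two_pow {x k : ℕ} (h : x < 2 ^ k) : F x ≤ 2 * k + 1 := by
  have := Nat.size_le.mpr h
  unfold F; omega

lemma F_le_two_mul_log_add_three (x : ℕ) : F x ≤ 2 * Nat.log 2 x + 3 := by
  have := F_le_of_lt_two_pow (Nat.lt_pow_succ_log_self one_lt_two x)
  omega

lemma log_F_le {x : ℕ} (hx : 2 ≤ Nat.log 2 x) :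
    Nat.log 2 (F x) ≤ Nat.log 2 (Nat.log 2 x) + 2 :=
  Nat.log_le_log_add_of_le_pow_mul one_lt_two (by have := F_le_two_mul_log_add_three x; omega)

lemma logStar_F_le {x : ℕ} (hx : 16 ≤ x) : logStar (F x) ≤ logStar x := by
  have hy : 4 ≤ Nat.log 2 x := Nat.le_log_of_pow_le one_lt_two hx
  have hz : 2 ≤ Nat.log 2 (Nat.log 2 x) := Nat.le_log_of_pow_le one_lt_two hy
  calc logStar (F x) ≤ logStar (Nat.log 2 x) + 1 :=
        logStar_le_of_le_pow_mul (k := 2) (by omega)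
          (le_trans (by norm_num) (Nat.pow_le_pow_right two_pos hz))
          (by have := F_le_two_mul_log_add_three x; omega)
    _ = logStar x := (logStar_of_two_le (by omega)).symm

lemma logStar_F_F_lt {x : ℕ} (hx : 2 ^ 16 ≤ x) : logStar (F (F x)) < logStar x := by
  have hy : 16 ≤ Nat.log 2 x := Nat.le_log_of_pow_le one_lt_two hx
  have hz : 4 ≤ Nat.log 2 (Nat.log 2 x) := Nat.le_log_of_pow_le one_lt_two hy
  have hv : 2 ≤ Nat.log 2 (Nat.log 2 (Nat.log 2 x)) := Nat.le_log_of_pow_le one_lt_two hz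
  have hFF : F (F x) ≤ 2 ^ 3 * Nat.log 2 (Nat.log 2 x) := by
    have := F_le_two_mul_log_add_three (F x)
    have := log_F_le (x := x) (by omega)
    omega
  calc logStar (F (F x)) ≤ logStar (Nat.log 2 (Nat.log 2 x)) + 1 :=
        logStar_le_of_le_pow_mul (by omega)
          (le_trans (by norm_num) (Nat.pow_le_pow_right two_pos hv)) hFF
    _ < logStar x := by
        rw [logStar_of_two_le (x := x) (by omega), logStar_of_two_le (x := Nat.log 2 x) (by omega)]
        omega

lemma F_iterate_three_lt_ten {x : ℕ} (hx : x < 2 ^ 16) : F^[3] x < 10 := by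
  have h1 : F x < 2 ^ 6 := by have := F_le_of_lt_two_pow hx; omega
  have h2 : F (F x) < 2 ^ 4 := by have := F_le_of_lt_two_pow h1; omega
  have h3 := F_le_of_lt_two_pow h2
  simp only [Function.iterate_succ, Function.iterate_zero, Function.comp_apply, id]
  omega

lemma exists_iterate_F_lt_ten (n : ℕ) :
    ∀ x, logStar x ≤ n → ∃ t ≤ 2 * n + 1, F^[t] x < 10 := by
  induction n with
  | zero =>
    intro x hx
    have : x ≤ 1 := by
      by_contra! h
      rw [logStar_of_two_le h] at hx
      omega
    exact ⟨0, by omega, by simp only [Function.iterate_zero, id]; omega⟩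
  | succ n ih =>
    intro x hx
    rcases Nat.lt_or_ge x (2 ^ 16) with hsmall | hlarge
    · exact ⟨3, by omega, F_iterate_three_lt_ten hsmall⟩
    · obtain ⟨t, ht, hlt⟩ := ih (F (F x)) (by have := logStar_F_F_lt hlarge; omega)
      exact ⟨t + 2, by omega, by rwa [Function.iterate_add_apply]⟩

theorem logStar_F_and_iterate :
    ∃ α : ℕ, 0 < α ∧ ∀ x : ℕ, 16 ≤ x →
      logStar (F x) ≤ logStar x ∧ ∃ t : ℕ, t ≤ α * logStar x ∧ F^[t] x < 10 := by
  refine ⟨3, by norm_num, fun x hx => ⟨logStar_F_le hx, ?_⟩⟩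
  have hpos : 1 ≤ logStar x := by rw [logStar_of_two_le (by omega)]; omega
  obtain ⟨t, ht, hlt⟩ := exists_iterate_F_lt_ten (logStar x) x le_rfl
  exact ⟨t, by omega, hlt⟩
end

section
/- Suppose x, y, z ∈ ℕ satisfy x > y ≥ 10 and z < y with z = f(x,y), where f is the Cole–Vishkin function. Then z ≠ f(y, w) for any w < y, i.e., applying the reduction simultaneously along a strictly decreasing chain x > y > w preserves distinctness of adjacent reduced values: f(x,y) ≠ f(y,w). -/
lemma cvIdx_mem (X Y : ℕ) :
    cvIdx X Y ∈ ({min X.size Y.size} ∪ {k | X.testBit k ≠ Y.testBit k} : Set ℕ) :=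
  Nat.sInf_mem ⟨min X.size Y.size, Or.inl rfl⟩

lemma cvIdx_le {X Y k : ℕ} (h : X.testBit k ≠ Y.testBit k) : cvIdx X Y ≤ k :=
  Nat.sInf_le (Or.inr h)

theorem cvF_chain (x y z : ℕ) (hxy : x > y) (hy : y ≥ 10) (hz : z = cvF x y)
    (hzy : z < y) : ∀ w, w < y → z ≠ cvF y w := by
  intro w hw heq
  subst hz
  set i := cvIdx x y with hi
  set j := cvIdx y w with hj
  have hkey : i = j ∧ x.testBit i = y.testBit j := by
    unfold cvF at heq
    rw [← hi, ← hj] at heq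
    by_cases h1 : x.testBit i <;> by_cases h2 : y.testBit j <;>
      simp [h1, h2] at heq ⊢ <;> omega
  obtain ⟨hij, hbit⟩ := hkey
  rcases cvIdx_mem x y with hm | hd
  · -- i = min of sizes, hence i = y.size
    have hsz : y.size ≤ x.size := Nat.size_le_size (le_of_lt hxy)
    have hiy : i = y.size := by
      simp only [Set.mem_singleton_iff] at hm
      omega
    -- y ≠ w, so they differ at some bit k < y.size
    have hne : y ≠ w := by omega
    have hex : ∃ k, y.testBit k ≠ w.testBit k := by
      by_contra hc
      push_neg at hc
      exact hne (Nat.eq_of_testBit_eq fun k => hc k)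
    obtain ⟨k, hk⟩ := hex
    have hjk : j ≤ k := cvIdx_le hk
    have hky : k < y.size := by
      by_contra hc
      push_neg at hc
      have h1 : y.testBit k = false :=
        Nat.testBit_eq_false_of_lt (lt_of_lt_of_le (Nat.lt_size_self y) (Nat.pow_le_pow_right (by norm_num) hc))
      have h2 : w.testBit k = false :=
        Nat.testBit_eq_false_of_lt (lt_of_lt_of_le (lt_trans hw (Nat.lt_size_self y)) (Nat.pow_le_pow_right (by norm_num) hc))
      exact hk (h1.trans h2.symm)
    omega
  · -- i is a differing bit of x, y; but hbit says they agree there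
    simp only [Set.mem_setOf_eq] at hd
    rw [← hi] at hd
    rw [← hij] at hbit
    exact hd hbit
end
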